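/- arXiv:1106.2932 — 6 statements merged into one kernel-verified Lean document; each statement's English description precedes it below -/
import Mathlib

section
/- Let q ≥ 2 and m ≥ 1 be integers, and let A_m be the q^m × q^m 0-1 matrix with (A_m)_{ij} = 1 if and only if res(i−1, m−1) = part(j−1, 1), where indices i, j range over {1, …, q^m}. Then for every integer k with 1 ≤ k ≤ m, the entry (A_m^k)_{ij} equals 1 if res(i−1, m−k) = part(j−1, k), and equals 0 otherwise. In particular each entry of A_m^k for 1 ≤ k ≤ m is 0 or 1. -/
def pt (q n s : ℕ) : ℕ := n / q ^ s
def rs (q n s : ℕ) : ℕ := n % q ^ s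
def A (q m : ℕ) : Matrix (Fin (q ^ m)) (Fin (q ^ m)) ℤ :=
  Matrix.of fun i j => if rs q i.val (m - 1) = pt q j.val 1 then 1 else 0

lemma aux_pow_A (q m : ℕ) (hq : 2 ≤ q) (_hm : 1 ≤ m) :
    ∀ k, 1 ≤ k → k ≤ m → ∀ i j : Fin (q ^ m),
      (A q m ^ k) i j = if rs q i.val (m - k) = pt q j.val k then 1 else 0 := by
  have hq0 : 0 < q := by omega
  intro k
  induction k with
  | zero => omega
  | succ k ih =>
    intro _ hkm i j
    rcases Nat.eq_zero_or_pos k with rfl | hk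
    · rw [pow_one]; rfl
    · have hkm' : k ≤ m := by omega
      set s := m - 1 - k with hs
      have hm1 : m - 1 = k + s := by omega
      have hmk : m - k = s + 1 := by omega
      have hmk1 : m - (k + 1) = s := by omega
      have hmeq : m = s + 1 + k := by omega
      rw [pow_succ, Matrix.mul_apply]
      simp only [ih hk hkm']
      simp only [A, Matrix.of_apply, rs, pt, hm1, hmk, hmk1]
      have hdivj : j.val / q ^ 1 / q ^ k = j.val / q ^ (k + 1) := by
        rw [Nat.div_div_eq_div_mul, ← pow_add, add_comm]
      have key : ∀ l : Fin (q ^ m),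
          i.val % q ^ (s + 1) = l.val / q ^ k → l.val % q ^ (k + s) = j.val / q ^ 1 →
          i.val % q ^ s = j.val / q ^ (k + 1) ∧
            l.val = i.val % q ^ (s + 1) * q ^ k + (j.val / q ^ 1) % q ^ k := by
        intro l hP hQ
        have h1 : i.val % q ^ s = (l.val / q ^ k) % q ^ s := by
          rw [← hP, Nat.mod_mod_of_dvd _ (pow_dvd_pow q (by omega))]
        have h2 : (l.val / q ^ k) % q ^ s = (l.val % q ^ (k + s)) / q ^ k := by
          rw [pow_add, Nat.mod_mul_right_div_self]
        have h3 : l.val % q ^ k = (j.val / q ^ 1) % q ^ k := by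
          rw [← hQ, Nat.mod_mod_of_dvd _ (pow_dvd_pow q (by omega))]
        constructor
        · rw [h1, h2, hQ, hdivj]
        · calc l.val = q ^ k * (l.val / q ^ k) + l.val % q ^ k :=
                (Nat.div_add_mod _ _).symm
            _ = i.val % q ^ (s + 1) * q ^ k + (j.val / q ^ 1) % q ^ k := by
                rw [← hP, h3, mul_comm]
      by_cases hcond : i.val % q ^ s = j.val / q ^ (k + 1)
      · rw [if_pos hcond]
        set a := i.val % q ^ (s + 1) with ha
        set b := (j.val / q ^ 1) % q ^ k with hb
        have hb_lt : b < q ^ k := Nat.mod_lt _ (pow_pos hq0 k)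
        have ha_lt : a < q ^ (s + 1) := Nat.mod_lt _ (pow_pos hq0 _)
        have hl0 : a * q ^ k + b < q ^ m := by
          calc a * q ^ k + b < (a + 1) * q ^ k := by rw [add_one_mul]; omega
            _ ≤ q ^ (s + 1) * q ^ k := Nat.mul_le_mul_right _ ha_lt
            _ = q ^ m := by rw [← pow_add, hmeq]
        have hP0 : (a * q ^ k + b) / q ^ k = a := by
          rw [add_comm, Nat.add_mul_div_right _ _ (pow_pos hq0 k),
            Nat.div_eq_of_lt hb_lt, zero_add]
        have hamod : a % q ^ s = j.val / q ^ (k + 1) := by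
          rw [ha, Nat.mod_mod_of_dvd _ (pow_dvd_pow q (by omega))]; exact hcond
        have hjq : j.val / q ^ 1 < q ^ (k + s) := by
          rw [Nat.div_lt_iff_lt_mul (pow_pos hq0 1), ← pow_add]
          have : k + s + 1 = m := by omega
          rw [this]
          exact j.isLt
        have hd : j.val / q ^ (k + 1) * q ^ k + b = j.val / q ^ 1 := by
          rw [← hdivj, hb]; exact Nat.div_add_mod' _ _
        have hsplit : a * q ^ k + b = (a / q ^ s) * q ^ (k + s) + j.val / q ^ 1 := by
          conv_lhs => rw [← Nat.div_add_mod a (q ^ s)]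
          rw [hamod, ← hd]
          ring
        have hQ0 : (a * q ^ k + b) % q ^ (k + s) = j.val / q ^ 1 := by
          rw [hsplit, add_comm, Nat.add_mul_mod_self_right, Nat.mod_eq_of_lt hjq]
        rw [Finset.sum_eq_single (⟨a * q ^ k + b, hl0⟩ : Fin (q ^ m))]
        · show (if i.val % q ^ (s + 1) = (a * q ^ k + b) / q ^ k then (1:ℤ) else 0) *
              (if (a * q ^ k + b) % q ^ (k + s) = j.val / q ^ 1 then (1:ℤ) else 0) = 1
          rw [hP0, hQ0, if_pos ha, if_pos rfl, mul_one]
        · intro l _ hne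
          by_cases h1 : i.val % q ^ (s + 1) = l.val / q ^ k
          · by_cases h2 : l.val % q ^ (k + s) = j.val / q ^ 1
            · exact absurd (Fin.ext ((key l h1 h2).2)) hne
            · rw [if_neg h2, mul_zero]
          · rw [if_neg h1, zero_mul]
        · intro h; exact absurd (Finset.mem_univ _) h
      · rw [if_neg hcond]
        apply Finset.sum_eq_zero
        intro l _
        by_cases h1 : i.val % q ^ (s + 1) = l.val / q ^ k
        · by_cases h2 : l.val % q ^ (k + s) = j.val / q ^ 1
          · exact absurd (key l h1 h2).1 hcond
          · rw [if_neg h2, mul_zero]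
        · rw [if_neg h1, zero_mul]

theorem pow_A_entries (q m : ℕ) (hq : 2 ≤ q) (hm : 1 ≤ m) (k : ℕ)
    (hk1 : 1 ≤ k) (hkm : k ≤ m) (i j : Fin (q ^ m)) :
    (A q m ^ k) i j = if rs q i.val (m - k) = pt q j.val k then 1 else 0 :=
  aux_pow_A q m hq hm k hk1 hkm i j
end

section
/- Let q ≥ 2, m ≥ 1, and let A_m be the q^m × q^m 0-1 matrix with (A_m)_{ij} = 1 iff res(i−1, m−1) = part(j−1, 1). Then every entry of A_m^m equals 1, i.e., A_m^m is the all-ones matrix. -/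
lemma mod_small (q a c s : ℕ) (hq : 2 ≤ q) (hc : c < q) :
    (q * a + c) % q ^ (s + 1) = q * (a % q ^ s) + c := by
  have h1 : q * a + c = (q * (a % q ^ s) + c) + q ^ (s + 1) * (a / q ^ s) := by
    calc q * a + c = q * (q ^ s * (a / q ^ s) + a % q ^ s) + c := by rw [Nat.div_add_mod]
    _ = (q * (a % q ^ s) + c) + q ^ (s + 1) * (a / q ^ s) := by ring
  rw [h1, Nat.add_mul_mod_self_left]
  apply Nat.mod_eq_of_lt
  have h2 : a % q ^ s < q ^ s := Nat.mod_lt _ (by positivity)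
  have h3 : q ^ (s + 1) = q * q ^ s := by ring
  nlinarith

lemma pow_entry (q m : ℕ) (hq : 2 ≤ q) :
    ∀ k, 1 ≤ k → k ≤ m → ∀ i j : Fin (q ^ m),
      (A q m ^ k) i j = if rs q i.val (m - k) = pt q j.val k then 1 else 0 := by
  intro k
  induction k with
  | zero => omega
  | succ k ih =>
    intro _ hk1 i j
    rcases Nat.eq_zero_or_pos k with hk0 | hkpos
    · subst hk0
      simp [A, pow_one, rs, pt]
    have hq0 : 0 < q := by omega
    set s := m - (k + 1) with hs
    have hms : m - k = s + 1 := by omega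
    have hm1 : m - 1 = s + k := by omega
    set a := i.val % q ^ (m - 1) with ha
    set b := j.val / q ^ k with hb
    have hblt : b < q ^ (s + 1) := by
      rw [hb, Nat.div_lt_iff_lt_mul (by positivity)]
      calc (j : ℕ) < q ^ m := j.isLt
      _ = q ^ (s + 1) * q ^ k := by rw [← pow_add]; congr 1; omega
    have halt : a < q ^ (m - 1) := Nat.mod_lt _ (by positivity)
    set l₀ : ℕ := q * a + b % q with hl0
    have hl0lt : l₀ < q ^ m := by
      have hbq : b % q < q := Nat.mod_lt _ hq0
      have hqm : q ^ m = q * q ^ (m - 1) := by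
        rw [← pow_succ']; congr 1; omega
      rw [hl0, hqm]
      nlinarith
    -- key equivalence
    have key : ∀ l : Fin (q ^ m),
        ((rs q i.val (m - 1) = pt q l.val 1 ∧ rs q l.val (m - k) = pt q j.val k)
          ↔ (l.val = l₀ ∧ i.val % q ^ s = j.val / q ^ (k + 1))) := by
      intro l
      simp only [rs, pt, pow_one, hms, ← ha, ← hb]
      have hmod : a % q ^ s = i.val % q ^ s := by
        rw [ha, Nat.mod_mod_of_dvd _ (pow_dvd_pow q (by omega))]
      have hdiv : b / q = j.val / q ^ (k + 1) := by
        rw [hb, Nat.div_div_eq_div_mul, ← pow_succ]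
      constructor
      · rintro ⟨h1, h2⟩
        have hl : l.val = q * a + l.val % q := by
          conv_lhs => rw [← Nat.div_add_mod l.val q]
          rw [← h1]
        rw [hl, mod_small q a (l.val % q) s hq (Nat.mod_lt _ hq0)] at h2
        -- h2 : q * (a % q ^ s) + l.val % q = b
        have hc : l.val % q = b % q := by
          rw [← h2, Nat.mul_add_mod, Nat.mod_eq_of_lt (Nat.mod_lt _ hq0)]
        have hx : a % q ^ s = b / q := by
          rw [← h2, Nat.mul_add_div hq0, Nat.div_eq_of_lt (Nat.mod_lt _ hq0), Nat.add_zero]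
        refine ⟨by rw [hl, hc], by rw [← hmod, hx, hdiv]⟩
      · rintro ⟨h1, h2⟩
        have hc : b % q < q := Nat.mod_lt _ hq0
        constructor
        · rw [h1, hl0, Nat.mul_add_div hq0, Nat.div_eq_of_lt hc, Nat.add_zero]
        · rw [h1, hl0, mod_small q a (b % q) s hq hc, hmod, h2, ← hdiv,
            Nat.div_add_mod]
    -- rewrite the power
    rw [pow_succ', Matrix.mul_apply]
    have hrw : ∀ l : Fin (q ^ m),
        (A q m) i l * (A q m ^ k) l j
          = if (l.val = l₀ ∧ i.val % q ^ s = j.val / q ^ (k + 1)) then 1 else 0 := by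
      intro l
      rw [show (A q m) i l = if rs q i.val (m - 1) = pt q l.val 1 then 1 else 0 from rfl,
        ih hkpos (by omega) l j]
      by_cases h : (l.val = l₀ ∧ i.val % q ^ s = j.val / q ^ (k + 1))
      · obtain ⟨h1, h2⟩ := (key l).mpr h
        rw [if_pos h1, if_pos h2, if_pos h, one_mul]
      · rw [if_neg h]
        by_cases h1 : rs q i.val (m - 1) = pt q l.val 1
        · rw [if_pos h1, one_mul,
            if_neg (fun h2 => h ((key l).mp ⟨h1, h2⟩))]
        · rw [if_neg h1, zero_mul]
    rw [Finset.sum_congr rfl fun l _ => hrw l]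
    simp only [rs, pt]
    by_cases hcond : i.val % q ^ s = j.val / q ^ (k + 1)
    · simp only [hcond, and_true, if_pos]
      have hx : ∀ x : Fin (q ^ m), (x.val = l₀) = (x = ⟨l₀, hl0lt⟩) := by
        intro x; simp [Fin.ext_iff]
      simp only [hx]
      simp [Finset.sum_ite_eq]
    · simp [hcond]

theorem pow_m_all_one (q m : ℕ) (hq : 2 ≤ q) (hm : 1 ≤ m) (i j : Fin (q ^ m)) :
    (A q m ^ m) i j = 1 := by
  rw [pow_entry q m hq m hm le_rfl i j]
  rw [if_pos]
  simp only [rs, pt, Nat.sub_self, pow_zero, Nat.mod_one]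
  exact (Nat.div_eq_of_lt j.isLt).symm
end

section
/- Let q ≥ 2, m ≥ 1, and let A_m be the q^m × q^m 0-1 matrix with (A_m)_{ij} = 1 iff res(i−1, m−1) = part(j−1, 1). If P is a subset of {1, …, q^m} such that the principal submatrix A_m(P) (rows and columns indexed by P) has nonzero determinant, then A_m(P) is a permutation matrix (each row and each column has exactly one entry equal to 1). -/
theorem nonzero_minor_perm (q m : ℕ) (hq : 2 ≤ q) (hm : 1 ≤ m)
    (P : Finset (Fin (q ^ m)))
    (hdet : ((A q m).submatrix (Subtype.val : {x // x ∈ P} → Fin (q ^ m))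
      Subtype.val).det ≠ 0) :
    (∀ r : {x // x ∈ P}, ∃! c : {x // x ∈ P},
        (A q m).submatrix (Subtype.val : {x // x ∈ P} → Fin (q ^ m)) Subtype.val r c = 1) ∧
    (∀ c : {x // x ∈ P}, ∃! r : {x // x ∈ P},
        (A q m).submatrix (Subtype.val : {x // x ∈ P} → Fin (q ^ m)) Subtype.val r c = 1) := by
  set M := (A q m).submatrix (Subtype.val : {x // x ∈ P} → Fin (q ^ m)) Subtype.val with hM
  have hval : ∀ r c : {x // x ∈ P},
      M r c = if rs q r.val.val (m - 1) = pt q c.val.val 1 then 1 else 0 := by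
    intro r c; rfl
  have hentry : ∀ r c : {x // x ∈ P},
      M r c = 1 ↔ rs q r.val.val (m - 1) = pt q c.val.val 1 := by
    intro r c
    rw [hval]
    split_ifs with h <;> simp [h]
  -- columns with equal `pt` are identical
  have hcolinj : ∀ c1 c2 : {x // x ∈ P},
      pt q c1.val.val 1 = pt q c2.val.val 1 → c1 = c2 := by
    intro c1 c2 h
    by_contra hne
    exact hdet (Matrix.det_zero_of_column_eq hne (fun r => by rw [hval, hval, h]))
  -- rows with equal `rs` are identical
  have hrowinj : ∀ r1 r2 : {x // x ∈ P},
      rs q r1.val.val (m - 1) = rs q r2.val.val (m - 1) → r1 = r2 := by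
    intro r1 r2 h
    by_contra hne
    exact hdet (Matrix.det_zero_of_row_eq hne (funext fun c => by rw [hval, hval, h]))
  -- each row has a 1
  have hrowex : ∀ r : {x // x ∈ P}, ∃ c, M r c = 1 := by
    intro r
    by_contra h
    push_neg at h
    refine hdet (Matrix.det_eq_zero_of_row_eq_zero r (fun c => ?_))
    by_cases hc : rs q r.val.val (m - 1) = pt q c.val.val 1
    · exact absurd ((hentry r c).mpr hc) (h c)
    · rw [hval, if_neg hc]
  -- each column has a 1
  have hcolex : ∀ c : {x // x ∈ P}, ∃ r, M r c = 1 := by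
    intro c
    by_contra h
    push_neg at h
    refine hdet (Matrix.det_eq_zero_of_column_eq_zero c (fun r => ?_))
    by_cases hc : rs q r.val.val (m - 1) = pt q c.val.val 1
    · exact absurd ((hentry r c).mpr hc) (h r)
    · rw [hval, if_neg hc]
  constructor
  · intro r
    obtain ⟨c, hc⟩ := hrowex r
    refine ⟨c, hc, fun c' hc' => ?_⟩
    rw [hentry] at hc hc'
    exact hcolinj c' c (hc'.symm.trans hc)
  · intro c
    obtain ⟨r, hr⟩ := hcolex c
    refine ⟨r, hr, fun r' hr' => ?_⟩
    rw [hentry] at hr hr'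
    exact hrowinj r' r (hr'.trans hr.symm)
end

section
/- Let q ≥ 2, M > m ≥ 1, and let i be an integer with 0 ≤ i < q^M. If l_M(i) = m, then l_m(part(i, M−m)) = m. -/
/-- `lm q m n = min { j | 1 ≤ j ≤ m and part(n,j) ≥ res(n, m-j) }`. -/
noncomputable def lm (q m n : ℕ) : ℕ :=
  sInf {j : ℕ | 1 ≤ j ∧ j ≤ m ∧ rs q n (m - j) ≤ pt q n j}

/-- The minimal prefix `n̄_m = n - res(n, m - l_m(n))`. -/
noncomputable def mp (q m n : ℕ) : ℕ := n - rs q n (m - lm q m n)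

theorem lm_down (q m M : ℕ) (hq : 2 ≤ q) (hm : 1 ≤ m) (hmM : m < M)
    (i : ℕ) (hi : i < q ^ M) (hl : lm q M i = m) :
    lm q m (pt q i (M - m)) = m := by
  set S : Set ℕ := {j : ℕ | 1 ≤ j ∧ j ≤ M ∧ rs q i (M - j) ≤ pt q i j} with hSdef
  have hMS : M ∈ S := by
    refine ⟨by omega, le_refl M, ?_⟩
    simp [rs, Nat.sub_self, Nat.mod_one]
  have hmem : m ∈ S := by
    have : lm q M i ∈ S := Nat.sInf_mem ⟨M, hMS⟩
    rwa [hl] at this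
  have F2 : rs q i (M - m) ≤ pt q i m := hmem.2.2
  have F1 : ∀ j, 1 ≤ j → j < m → pt q i j < rs q i (M - j) := by
    intro j h1 h2
    by_contra h
    push_neg at h
    have hj : j ∈ S := ⟨h1, by omega, h⟩
    have := Nat.sInf_le hj
    rw [show sInf S = lm q M i from rfl, hl] at this
    omega
  set n := pt q i (M - m) with hn
  set T : Set ℕ := {j : ℕ | 1 ≤ j ∧ j ≤ m ∧ rs q n (m - j) ≤ pt q n j} with hTdef
  have hTmem : m ∈ T := by
    refine ⟨hm, le_refl m, ?_⟩
    simp [rs, Nat.sub_self, Nat.mod_one]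
  have hTnot : ∀ j, j < m → j ∉ T := by
    rintro j hjm ⟨h1, h2, h3⟩
    -- notation
    have hb : 0 < q ^ (M - m) := pow_pos (by omega) _
    have e1 : q ^ (M - j) = q ^ (M - m) * q ^ (m - j) := by
      rw [← pow_add]; congr 1; omega
    -- A = i % q^(M-j), B = i / q^j
    set A := i % q ^ (M - j) with hA
    set B := i / q ^ j with hB
    -- decompose A
    have hA1 : A / q ^ (M - m) = n % q ^ (m - j) := by
      rw [hA, e1, Nat.mod_mul_right_div_self]; rfl
    have hA2 : A % q ^ (M - m) = i % q ^ (M - m) := by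
      rw [hA]
      exact Nat.mod_mod_of_dvd i (pow_dvd_pow q (by omega))
    have hAeq : q ^ (M - m) * (n % q ^ (m - j)) + i % q ^ (M - m) = A := by
      rw [← hA1, ← hA2]; exact Nat.div_add_mod A _
    -- decompose B
    have hy : pt q n j = B / q ^ (M - m) := by
      show n / q ^ j = B / q ^ (M - m)
      rw [hn, hB]
      show i / q ^ (M - m) / q ^ j = i / q ^ j / q ^ (M - m)
      rw [Nat.div_div_eq_div_mul, Nat.div_div_eq_div_mul, mul_comm]
    have hBeq : q ^ (M - m) * (B / q ^ (M - m)) + B % q ^ (M - m) = B :=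
      Nat.div_add_mod B _
    -- s ≥ pt q i m
    have hs : pt q i m ≤ B % q ^ (M - m) := by
      have e2 : q ^ j * q ^ (M - m) = q ^ (M - (m - j)) := by
        rw [← pow_add]; congr 1; omega
      have hsval : B % q ^ (M - m) = i % q ^ (M - (m - j)) / q ^ j := by
        rw [hB, ← e2, Nat.mod_mul_right_div_self]
      have hF1' : pt q i (m - j) < rs q i (M - (m - j)) := F1 (m - j) (by omega) (by omega)
      have : i / q ^ (m - j) / q ^ j ≤ i % q ^ (M - (m - j)) / q ^ j :=
        Nat.div_le_div_right (le_of_lt hF1')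
      rw [Nat.div_div_eq_div_mul, ← pow_add, show m - j + j = m by omega] at this
      rw [hsval]
      exact this
    -- x ≤ y gives contradiction
    have hAB : B < A := F1 j h1 hjm
    have hxy : n % q ^ (m - j) ≤ B / q ^ (M - m) := by rw [← hy]; exact h3
    have hmul : q ^ (M - m) * (n % q ^ (m - j)) ≤ q ^ (M - m) * (B / q ^ (M - m)) :=
      Nat.mul_le_mul_left _ hxy
    have hr : i % q ^ (M - m) ≤ pt q i m := F2
    omega
  -- conclude sInf T = m
  show sInf T = m
  have hle : sInf T ≤ m := Nat.sInf_le hTmem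
  by_contra hne
  have hlt : sInf T < m := lt_of_le_of_ne hle hne
  exact hTnot _ hlt (Nat.sInf_mem ⟨m, hTmem⟩)
end

section
/- Let q ≥ 2, M > m ≥ 1, and 0 ≤ i < q^M with l_M(i) = m. Then the minimal prefix satisfies ī_M = q^{M−m} · (part(i, M−m))‾_m. -/
/-!
Write `u = ⌊i / q⌋` and `e = i mod q`, so that `i` is `u` followed by the digit `e`. With `l = l_M(i)`
one shows `l_{M-1}(u) = l`, and iterating `M - m` times gives `l_m(part(i, M-m)) = m`, i.e. the minimal
prefix of `part(i, M-m)` is the whole number; both sides of the identity are then `i - res(i, M-m)`.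

Comparing `res(i, M-j) = e + q·res(u, M-1-j)` with `part(i, j) = d_j + q·part(u, j)`, where `d_j` is the
`j`-th digit of `i`, lexicographically shows that every `j` admissible for `i` is admissible for `u`. If some
`j < l` were admissible for `u` but not for `i`, then `res(u, M-1-j) = part(u, j)`, so the low digits of `u`
are `j`-periodic, and `d_j < e`. Periodicity then carries the admissibility of `l` for `i` down to
`l - j`, contradicting the minimality of `l`.
-/

section Digits

variable {q : ℕ}

lemma rs_lt (hq : 0 < q) (n s : ℕ) : rs q n s < q ^ s :=
  Nat.mod_lt _ (pow_pos hq s)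

lemma rs_add (n j k : ℕ) : rs q n (j + k) = rs q n j + q ^ j * rs q (pt q n j) k := by
  rw [rs, pow_add, Nat.mod_mul]
  rfl

lemma pt_add (n j k : ℕ) : pt q n (j + k) = pt q (pt q n j) k := by
  rw [pt, pt, pt, pow_add, Nat.div_div_eq_div_mul]

lemma rs_rs_of_le {n k s : ℕ} (h : k ≤ s) : rs q (rs q n s) k = rs q n k :=
  Nat.mod_mod_of_dvd n (pow_dvd_pow q h)

lemma pow_mul_pt_add_le (n j k : ℕ) : q ^ j * pt q n (k + j) ≤ pt q n k := by
  rw [pt_add]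
  exact Nat.mul_div_le _ _

lemma sub_rs_eq_pow_mul_pt (n s : ℕ) : n - rs q n s = q ^ s * pt q n s :=
  (Nat.mul_div_self_eq_mod_sub_self).symm

lemma add_mul_le_add_mul_iff {a b e d : ℕ} (he : e < q) (hd : d < q) :
    e + q * a ≤ d + q * b ↔ a < b ∨ a = b ∧ e ≤ d := by
  constructor
  · intro h
    rcases lt_trichotomy a b with hab | rfl | hab
    · exact Or.inl hab
    · exact Or.inr ⟨rfl, by omega⟩
    · have : q * (b + 1) ≤ q * a := Nat.mul_le_mul_left q hab
      nlinarith
  · rintro (hab | ⟨rfl, hed⟩)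
    · have : q * (a + 1) ≤ q * b := Nat.mul_le_mul_left q hab
      nlinarith
    · omega

end Digits

section MinimalPrefix

variable {q : ℕ}

lemma lm_le (q m n : ℕ) : lm q m n ≤ m := by
  rcases Nat.eq_zero_or_pos (lm q m n) with h | h
  · omega
  · exact (Nat.sInf_mem (Nat.nonempty_of_pos_sInf h)).2.1

lemma rs_le_pt_lm {m n : ℕ} (h : 1 ≤ lm q m n) :
    rs q n (m - lm q m n) ≤ pt q n (lm q m n) :=
  (Nat.sInf_mem (Nat.nonempty_of_pos_sInf h)).2.2

lemma pt_lt_rs_of_lt_lm {m n j : ℕ} (hj : 1 ≤ j) (hjl : j < lm q m n) :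
    pt q n j < rs q n (m - j) := by
  by_contra h
  have hmem : j ∈ {j : ℕ | 1 ≤ j ∧ j ≤ m ∧ rs q n (m - j) ≤ pt q n j} :=
    ⟨hj, (hjl.trans_le (lm_le q m n)).le, not_lt.1 h⟩
  exact (Nat.sInf_le hmem).not_gt hjl

lemma mp_eq_self {m n : ℕ} (h : lm q m n = m) : mp q m n = n := by
  simp [mp, h, rs, Nat.mod_one]

lemma rs_succ_eq (i k : ℕ) : rs q i (1 + k) = rs q i 1 + q * rs q (pt q i 1) k := by
  rw [rs_add, pow_one]

lemma pt_eq_digit_add (i j : ℕ) : pt q i j = rs q (pt q i j) 1 + q * pt q (pt q i 1) j := by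
  have hshift : pt q (pt q i j) 1 = pt q (pt q i 1) j := by
    rw [← pt_add, ← pt_add, add_comm]
  rw [← hshift]
  simp only [rs, pt, pow_one]
  exact (Nat.mod_add_div _ _).symm

lemma rs_pt_lt_rs_of_period {i j M k : ℕ} (hper : rs q (pt q i 1) (M - j) = pt q (pt q i 1) j)
    (hd : rs q (pt q i j) 1 < rs q i 1) (hk : k ≤ M - j) :
    rs q (pt q i j) (1 + k) < rs q i (1 + k) := by
  have hshift : pt q (pt q i j) 1 = rs q (pt q i 1) (M - j) := by
    rw [hper, ← pt_add, ← pt_add, add_comm]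
  rw [rs_succ_eq, rs_succ_eq i, hshift, rs_rs_of_le hk]
  omega

lemma rs_le_pt_sub_of_period (hq : 0 < q) {i j t M : ℕ}
    (hper : rs q (pt q i 1) (M - j) = pt q (pt q i 1) j)
    (hd : rs q (pt q i j) 1 < rs q i 1) (hjt : j < t) (htM : t ≤ M)
    (ht : rs q i (M + 1 - t) ≤ pt q i t) :
    rs q i (M + 1 - (t - j)) ≤ pt q i (t - j) := by
  obtain ⟨k, hk⟩ : ∃ k, M + 1 - t = 1 + k := ⟨M - t, by omega⟩
  have hblock := rs_pt_lt_rs_of_period hper hd (k := k) (by omega)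
  rw [hk] at ht
  refine le_of_lt ?_
  calc rs q i (M + 1 - (t - j)) = rs q i j + q ^ j * rs q (pt q i j) (1 + k) := by
        rw [← rs_add]; congr 1; omega
    _ < q ^ j * (rs q (pt q i j) (1 + k) + 1) := by
        have := rs_lt hq i j
        rw [mul_add_one]; omega
    _ ≤ q ^ j * rs q i (1 + k) := Nat.mul_le_mul_left _ hblock
    _ ≤ q ^ j * pt q i t := Nat.mul_le_mul_left _ ht
    _ ≤ pt q i (t - j) := by
        have := pow_mul_pt_add_le (q := q) i j (t - j)
        rwa [Nat.sub_add_cancel hjt.le] at this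

lemma lm_pt_one (hq : 0 < q) {M i : ℕ} (hl : 1 ≤ lm q (M + 1) i) (hlM : lm q (M + 1) i ≤ M) :
    lm q M (pt q i 1) = lm q (M + 1) i := by
  set l := lm q (M + 1) i
  set u := pt q i 1
  have he : rs q i 1 < q := by simpa using rs_lt hq i 1
  have hdigit (j : ℕ) : rs q (pt q i j) 1 < q := by simpa using rs_lt hq (pt q i j) 1
  have hexpand (j : ℕ) (hjM : j ≤ M) :
      rs q i (M + 1 - j) ≤ pt q i j ↔
        rs q u (M - j) < pt q u j ∨ rs q u (M - j) = pt q u j ∧ rs q i 1 ≤ rs q (pt q i j) 1 := by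
    rw [show M + 1 - j = 1 + (M - j) by omega, rs_succ_eq]
    conv_lhs => rw [pt_eq_digit_add i j]
    exact add_mul_le_add_mul_iff he (hdigit j)
  have hsucc : rs q u (M - l) ≤ pt q u l := by
    rcases (hexpand l hlM).1 (rs_le_pt_lm hl) with h | ⟨h, -⟩
    exacts [h.le, h.le]
  refine IsLeast.csInf_eq ⟨⟨hl, hlM, hsucc⟩, fun j ⟨hj, hjM, hju⟩ => ?_⟩
  by_contra! hjl
  have hfail := (not_congr (hexpand j hjM)).1 (pt_lt_rs_of_lt_lm hj hjl).not_ge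
  push Not at hfail
  have hper : rs q u (M - j) = pt q u j := le_antisymm hju hfail.1
  have hdown := rs_le_pt_sub_of_period hq hper (hfail.2 hper) hjl hlM (rs_le_pt_lm hl)
  exact (pt_lt_rs_of_lt_lm (m := M + 1) (by omega) (by omega : l - j < l)).not_ge hdown

lemma lm_pt_of_lm_add_eq (hq : 0 < q) {m : ℕ} (hm : 1 ≤ m) (k : ℕ) {i : ℕ}
    (h : lm q (m + k) i = m) : lm q m (pt q i k) = m := by
  induction k generalizing i with
  | zero => simpa [pt] using h
  | succ k ih =>
    rw [← add_assoc] at h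
    rw [add_comm, pt_add]
    exact ih ((lm_pt_one hq (by omega) (by omega)).trans h)

end MinimalPrefix

theorem mp_down_general (q m M : ℕ) (hq : 2 ≤ q) (hm : 1 ≤ m)
    (i : ℕ) (hl : lm q M i = m) :
    mp q M i = q ^ (M - m) * mp q m (pt q i (M - m)) := by
  have hmM : m ≤ M := hl ▸ lm_le q M i
  have hprefix : lm q m (pt q i (M - m)) = m :=
    lm_pt_of_lm_add_eq (by omega) hm (M - m) (by rwa [Nat.add_sub_cancel' hmM])
  rw [mp_eq_self hprefix, mp, hl, sub_rs_eq_pow_mul_pt]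

theorem mp_down (q m M : ℕ) (hq : 2 ≤ q) (hm : 1 ≤ m) (hmM : m < M)
    (i : ℕ) (hi : i < q ^ M) (hl : lm q M i = m) :
    mp q M i = q ^ (M - m) * mp q m (pt q i (M - m)) :=
  mp_down_general q m M hq hm i hl
end

section
/- Let q ≥ 2, m ≥ 1, and 0 ≤ i < q. Let j(m) = Σ_{n=1}^{m} i q^{n−1} (the number with base-q expansion consisting of m copies of the digit i). Then the minimal prefixes satisfy (q^{m−1} i)‾_m = (j(m))‾_m = i q^{m−1}; in particular l_m(q^{m−1} i) = l_m(j(m)) = 1. -/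
lemma lm_eq_one (q m n : ℕ) (hm : 1 ≤ m) (h : rs q n (m - 1) ≤ pt q n 1) :
    lm q m n = 1 := by
  have h1 : 1 ∈ {j : ℕ | 1 ≤ j ∧ j ≤ m ∧ rs q n (m - j) ≤ pt q n j} :=
    ⟨le_refl 1, hm, h⟩
  exact le_antisymm (Nat.sInf_le h1) (Nat.sInf_mem ⟨1, h1⟩).1

lemma sum_lt_pow (q i : ℕ) (hi : i < q) (t : ℕ) :
    (∑ n ∈ Finset.range t, i * q ^ n) < q ^ t := by
  induction t with
  | zero => simp
  | succ t ih =>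
    rw [Finset.sum_range_succ, pow_succ]
    calc (∑ n ∈ Finset.range t, i * q ^ n) + i * q ^ t
        < q ^ t + i * q ^ t := by omega
      _ = q ^ t * (1 + i) := by ring
      _ ≤ q ^ t * q := Nat.mul_le_mul_left _ (by omega)

theorem mp_repunit (q m : ℕ) (hq : 2 ≤ q) (hm : 1 ≤ m) (i : ℕ) (hi : i < q) :
    mp q m (q ^ (m - 1) * i) = i * q ^ (m - 1) ∧
    mp q m (∑ n ∈ Finset.range m, i * q ^ n) = i * q ^ (m - 1) ∧
    lm q m (q ^ (m - 1) * i) = 1 ∧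
    lm q m (∑ n ∈ Finset.range m, i * q ^ n) = 1 := by
  obtain ⟨t, rfl⟩ : ∃ t, m = t + 1 := ⟨m - 1, by omega⟩
  have ht : t + 1 - 1 = t := rfl
  set s := ∑ n ∈ Finset.range t, i * q ^ n with hs
  have hsum : (∑ n ∈ Finset.range (t + 1), i * q ^ n) = s + i * q ^ t :=
    Finset.sum_range_succ _ _
  have hslt : s < q ^ t := sum_lt_pow q i hi t
  -- first number
  have hrs1 : rs q (q ^ t * i) t = 0 := by
    simp [rs, Nat.mul_mod_right]
  have hlm1 : lm q (t + 1) (q ^ t * i) = 1 :=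
    lm_eq_one q (t + 1) _ (by omega) (by rw [ht, hrs1]; exact Nat.zero_le _)
  -- second number
  have hqs : (∑ n ∈ Finset.range (t + 1), i * q ^ n) = i + q * s := by
    rw [Finset.sum_range_succ', hs, Finset.mul_sum]
    simp only [pow_zero, mul_one, pow_succ]
    rw [Nat.add_comm]
    congr 1
    exact Finset.sum_congr rfl fun x _ => by ring
  have hrs2 : rs q (∑ n ∈ Finset.range (t + 1), i * q ^ n) t = s := by
    rw [hsum, rs, Nat.add_mul_mod_self_right, Nat.mod_eq_of_lt hslt]
  have hpt2 : pt q (∑ n ∈ Finset.range (t + 1), i * q ^ n) 1 = s := by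
    rw [hqs, pt, pow_one, Nat.add_mul_div_left _ _ (by omega : 0 < q),
      Nat.div_eq_of_lt hi, Nat.zero_add]
  have hlm2 : lm q (t + 1) (∑ n ∈ Finset.range (t + 1), i * q ^ n) = 1 :=
    lm_eq_one q (t + 1) _ (by omega) (by rw [ht, hrs2, hpt2])
  refine ⟨?_, ?_, hlm1, hlm2⟩
  · rw [mp, Nat.add_sub_cancel, hlm1, Nat.add_sub_cancel, hrs1, Nat.sub_zero, Nat.mul_comm]
  · rw [mp, Nat.add_sub_cancel, hlm2, Nat.add_sub_cancel, hrs2, hsum, Nat.add_sub_cancel_left]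
end
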